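/- Let δ ∈ (0,1) and consider F_δ(a,b,c,d) = ((1+δ)/2)(H₂(a+b)+H₂(a+c)) − H(a,b,c,d) − (a+d) log₂ δ + log₂(1+δ) − δ on the simplex {a,b,c,d ≥ 0, a+b+c+d=1}. At a boundary point of the form (a,b,0,0) with a,b > 0, a+b=1, the perturbation (a−Δ, b, 0, Δ) changes the value of F_δ by ((δ−1)/2 + o(1)) Δ log₂(1/Δ) as Δ → 0⁺; in particular F_δ(a−Δ, b, 0, Δ) < F_δ(a,b,0,0) for all sufficiently small Δ > 0. -/

import Mathlib

open Real Filter

/-- One term of base-2 Shannon entropy, with the convention `0 · log 0 = 0`. -/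
noncomputable def ent (p : ℝ) : ℝ := -(p * Real.logb 2 p)

/-- Binary entropy, base 2. -/
noncomputable def H₂ (p : ℝ) : ℝ := ent p + ent (1 - p)

/-- The functional `F_δ` of the paper. -/
noncomputable def Fδ (δ a b c d : ℝ) : ℝ :=
  ((1+δ)/2) * (H₂ (a+b) + H₂ (a+c)) - (ent a + ent b + ent c + ent d)
    - (a+d) * Real.logb 2 δ + Real.logb 2 (1+δ) - δ

/-!
Along the perturbation the only non-smooth contributions are the `ent Δ` terms, coming from
`H₂(1 - Δ)` with weight `(1+δ)/2` and from the new coordinate `d = Δ` with weight `-1`; they add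
up to `((δ-1)/2) Δ log₂(1/Δ)`. Everything else is differentiable at `Δ = 0` and vanishes there,
hence is `O(Δ) = o(Δ log₂(1/Δ))`.
-/

open Asymptotics

@[simp] lemma ent_zero : ent 0 = 0 := by simp [ent]

@[simp] lemma ent_one : ent 1 = 0 := by simp [ent]

lemma ent_eq_mul_logb_one_div (p : ℝ) : ent p = p * logb 2 (1 / p) := by
  rw [one_div, logb_inv, ent]; ring

lemma differentiableAt_ent {p : ℝ} (hp : p ≠ 0) : DifferentiableAt ℝ ent p :=
  (differentiableAt_id.mul ((differentiableAt_log hp).div_const (log 2))).neg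

lemma isLittleO_mul_logb_one_div {B : ℝ} (hB : 1 < B) :
    (fun x : ℝ => x) =o[nhdsWithin 0 (Set.Ioi 0)] fun x => x * logb B (1 / x) := by
  have hlog : Tendsto (fun x : ℝ => logb B (1 / x)) (nhdsWithin 0 (Set.Ioi 0)) atTop := by
    simpa only [Function.comp_def, one_div] using
      (tendsto_logb_atTop hB).comp tendsto_inv_nhdsGT_zero
  simpa using (isBigO_refl (fun x : ℝ => x) _).mul_isLittleO
    ((isLittleO_one_left_iff ℝ).2 (tendsto_norm_atTop_atTop.comp hlog))

/-- The smooth part of `Fδ δ (a-Δ) b 0 Δ - Fδ δ a b 0 0`. -/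
noncomputable def boundaryRemainder (δ a b Δ : ℝ) : ℝ :=
  ((1+δ)/2) * (ent (1-Δ) + ent (a-Δ) + ent (b+Δ) - ent a - ent b) + (ent a - ent (a-Δ))

lemma Fδ_perturb_sub_eq (δ Δ : ℝ) {a b : ℝ} (hab : a + b = 1) :
    Fδ δ (a-Δ) b 0 Δ - Fδ δ a b 0 0 = (δ-1)/2 * ent Δ + boundaryRemainder δ a b Δ := by
  have h1 : a - Δ + b = 1 - Δ := by linarith
  have h2 : 1 - (a - Δ) = b + Δ := by linarith
  have h3 : 1 - a = b := by linarith
  simp only [Fδ, H₂, boundaryRemainder, hab, h1, h2, h3, add_zero, sub_self, sub_sub_cancel,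
    ent_one, ent_zero]
  ring

lemma boundaryRemainder_zero (δ a b : ℝ) : boundaryRemainder δ a b 0 = 0 := by
  simp [boundaryRemainder]

lemma differentiableAt_boundaryRemainder (δ : ℝ) {a b : ℝ} (ha : a ≠ 0) (hb : b ≠ 0) :
    DifferentiableAt ℝ (boundaryRemainder δ a b) 0 := by
  have hent : ∀ c s : ℝ, c ≠ 0 → DifferentiableAt ℝ (fun Δ : ℝ => ent (c + s * Δ)) 0 :=
    fun c s hc => (differentiableAt_ent (by simpa using hc)).comp 0 (by fun_prop)
  have h1 := hent 1 (-1) one_ne_zero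
  have h2 := hent a (-1) ha
  have h3 := hent b 1 hb
  simp only [neg_one_mul, ← sub_eq_add_neg, one_mul] at h1 h2 h3
  unfold boundaryRemainder
  fun_prop

lemma isLittleO_boundaryRemainder (δ : ℝ) {a b : ℝ} (ha : a ≠ 0) (hb : b ≠ 0) :
    boundaryRemainder δ a b =o[nhdsWithin 0 (Set.Ioi 0)] fun Δ => Δ * logb 2 (1 / Δ) := by
  have hO := (differentiableAt_boundaryRemainder δ ha hb).isBigO_sub
  simp only [boundaryRemainder_zero, sub_zero] at hO
  exact (hO.mono nhdsWithin_le_nhds).trans_isLittleO (isLittleO_mul_logb_one_div one_lt_two)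

lemma eventually_neg_of_eq_add_mul {α : Type*} {l : Filter α} {f g e : α → ℝ} {c : ℝ}
    (hc : c < 0) (he : Tendsto e l (nhds 0)) (hg : ∀ᶠ x in l, 0 < g x)
    (hf : ∀ᶠ x in l, f x = (c + e x) * g x) : ∀ᶠ x in l, f x < 0 := by
  filter_upwards [hf, hg, he.eventually (gt_mem_nhds (neg_pos.2 hc))] with x hfx hgx hex
  rw [hfx]
  exact mul_neg_of_neg_of_pos (by linarith) hgx

lemma eventually_mul_logb_one_div_pos {B : ℝ} (hB : 1 < B) :
    ∀ᶠ x in nhdsWithin (0:ℝ) (Set.Ioi 0), 0 < x * logb B (1 / x) := by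
  filter_upwards [Ioo_mem_nhdsGT one_pos] with x ⟨hx0, hx1⟩
  exact mul_pos hx0 (logb_pos hB (by rw [one_div]; exact (one_lt_inv₀ hx0).2 hx1))

theorem boundary_not_min (δ a b : ℝ) (hδ : δ ∈ Set.Ioo (0:ℝ) 1)
    (ha : 0 < a) (hb : 0 < b) (hab : a + b = 1) :
    (∃ e : ℝ → ℝ, Tendsto e (nhdsWithin 0 (Set.Ioi 0)) (nhds 0) ∧
      ∀ᶠ Δ in nhdsWithin 0 (Set.Ioi (0:ℝ)),
        Fδ δ (a-Δ) b 0 Δ - Fδ δ a b 0 0 = ((δ-1)/2 + e Δ) * (Δ * Real.logb 2 (1/Δ))) ∧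
    ∀ᶠ Δ in nhdsWithin 0 (Set.Ioi (0:ℝ)), Fδ δ (a-Δ) b 0 Δ < Fδ δ a b 0 0 := by
  obtain ⟨e, he, hRe⟩ := (isLittleO_boundaryRemainder δ ha.ne' hb.ne').exists_eq_mul
  have hexp : ∀ᶠ Δ in nhdsWithin 0 (Set.Ioi (0:ℝ)),
      Fδ δ (a-Δ) b 0 Δ - Fδ δ a b 0 0 = ((δ-1)/2 + e Δ) * (Δ * logb 2 (1/Δ)) := by
    filter_upwards [hRe] with Δ hΔ
    rw [Fδ_perturb_sub_eq δ Δ hab, hΔ, ent_eq_mul_logb_one_div, Pi.mul_apply]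
    ring
  refine ⟨⟨e, he, hexp⟩, ?_⟩
  have hcoef : (δ-1)/2 < 0 := by linarith [hδ.2]
  filter_upwards [eventually_neg_of_eq_add_mul hcoef he
    (eventually_mul_logb_one_div_pos one_lt_two) hexp] with Δ hΔ
  linarith
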